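/- Let P(w) be a C^∞ family of N×N matrices with det P(w_0) = 0, and suppose the eigenvalue λ(w) of P(w) near 0 has constant algebraic multiplicity m near w_0, so that det(P(w) − z Id) = (λ(w) − z)^m e(w,z) with e ≠ 0 and λ(w_0) = 0. Then P is of principal type at w_0 if and only if dλ(w_0) ≠ 0 and the geometric multiplicity of λ equals the algebraic multiplicity m at w_0. -/

import Mathlib

open Filter Topology Matrix

namespace PrincipalTypeAux

lemma hasDerivAt_linear_matrix {N : ℕ} (L : Matrix (Fin N) (Fin N) ℂ →ₗ[ℂ] ℂ)
    {M : ℝ → Matrix (Fin N) (Fin N) ℂ} {B : Matrix (Fin N) (Fin N) ℂ}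
    (hM : ∀ i j, HasDerivAt (fun s => M s i j) (B i j) 0) :
    HasDerivAt (fun s => L (M s)) (L B) 0 := by
  have hrec : ∀ X : Matrix (Fin N) (Fin N) ℂ,
      L X = ∑ i, ∑ j, X i j * L (Matrix.single i j 1) := by
    intro X
    conv_lhs => rw [Matrix.matrix_eq_sum_single X]
    rw [map_sum]
    refine Finset.sum_congr rfl fun i _ => ?_
    rw [map_sum]
    refine Finset.sum_congr rfl fun j _ => ?_
    rw [← smul_eq_mul, ← _root_.map_smul]
    congr 1
    rw [Matrix.smul_single, smul_eq_mul, mul_one]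
  have : (fun s => L (M s)) = fun s => ∑ i, ∑ j, M s i j * L (Matrix.single i j 1) := by
    funext s; exact hrec (M s)
  rw [this, hrec B]
  refine HasDerivAt.fun_sum fun i _ => HasDerivAt.fun_sum fun j _ => ?_
  exact (hM i j).mul_const _

lemma tendsto_div_of_hasDerivAt {f : ℝ → ℂ} {b : ℂ} (h0 : f 0 = 0) (h : HasDerivAt f b 0) :
    Tendsto (fun s : ℝ => (s : ℂ)⁻¹ * f s) (𝓝[≠] (0:ℝ)) (𝓝 b) := by
  have := hasDerivAt_iff_tendsto_slope.1 h
  refine this.congr fun s => ?_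
  simp [slope_def_module, h0, Complex.real_smul, Complex.ofReal_inv]

lemma tendsto_matrix_of_entries {X : Type*} {l : Filter X} {m n : Type*} [Fintype m] [Fintype n]
    {f : X → Matrix m n ℂ} {A : Matrix m n ℂ}
    (h : ∀ i j, Tendsto (fun x => f x i j) l (𝓝 (A i j))) : Tendsto f l (𝓝 A) := by
  refine tendsto_pi_nhds.2 fun i => ?_
  exact tendsto_pi_nhds.2 (h i)

lemma tendsto_det {X : Type*} {l : Filter X} {n : Type*} [Fintype n] [DecidableEq n]
    {f : X → Matrix n n ℂ} {A : Matrix n n ℂ} (h : Tendsto f l (𝓝 A)) :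
    Tendsto (fun x => (f x).det) l (𝓝 A.det) :=
  (((Continuous.matrix_det continuous_id).continuousAt (x := A)).tendsto).comp h

lemma tendsto_matmul {X : Type*} {l : Filter X} {m n p : Type*} [Fintype m] [Fintype n] [Fintype p]
    {f : X → Matrix m n ℂ} {g : X → Matrix n p ℂ} {A : Matrix m n ℂ} {B : Matrix n p ℂ}
    (hf : Tendsto f l (𝓝 A)) (hg : Tendsto g l (𝓝 B)) :
    Tendsto (fun x => f x * g x) l (𝓝 (A * B)) :=
  ((((continuous_fst.matrix_mul continuous_snd).continuousAt
    (x := (A, B))).tendsto).comp (hf.prodMk_nhds hg) : _)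


lemma bijective_toLin_iff {k : ℕ} {V1 V2 : Type*} [AddCommGroup V1] [Module ℂ V1]
    [AddCommGroup V2] [Module ℂ V2] (b1 : Module.Basis (Fin k) ℂ V1) (b2 : Module.Basis (Fin k) ℂ V2)
    (X : Matrix (Fin k) (Fin k) ℂ) :
    Function.Bijective (Matrix.toLin b1 b2 X) ↔ X.det ≠ 0 := by
  have hfun : ⇑(Matrix.toLin b1 b2 X) = ⇑b2.equivFun.symm ∘ (X.mulVec ∘ ⇑b1.equivFun) := by
    funext v
    rw [Matrix.toLin_apply, Function.comp_apply, Function.comp_apply, b2.equivFun_symm_apply]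
    congr 1
  rw [hfun]
  rw [Function.Bijective.of_comp_iff' b2.equivFun.symm.bijective]
  rw [Function.Bijective.of_comp_iff _ b1.equivFun.bijective]
  constructor
  · intro h
    have hu : IsUnit X := Matrix.mulVec_injective_iff_isUnit.1 h.injective
    rw [Matrix.isUnit_iff_isUnit_det, isUnit_iff_ne_zero] at hu
    exact hu
  · intro h
    have hu : IsUnit X := by rwa [Matrix.isUnit_iff_isUnit_det, isUnit_iff_ne_zero]
    exact ⟨Matrix.mulVec_injective_iff_isUnit.2 hu, Matrix.mulVec_surjective_iff_isUnit.2 hu⟩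

set_option maxHeartbeats 1000000 in
lemma core {N : ℕ} (A B : Matrix (Fin N) (Fin N) ℂ)
    (M : ℝ → Matrix (Fin N) (Fin N) ℂ) (hM0 : M 0 = A)
    (hM : ∀ i j, HasDerivAt (fun s => M s i j) (B i j) 0) :
    ∃ c : ℂ,
      Tendsto (fun s : ℝ =>
          (M s).det / (s : ℂ) ^ Module.finrank ℂ (LinearMap.ker A.mulVecLin))
        (𝓝[≠] (0:ℝ)) (𝓝 c) ∧
      (c ≠ 0 ↔ Function.Bijective
        (fun u : LinearMap.ker A.mulVecLin =>
          (Submodule.Quotient.mk (B.mulVec u.1) :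
            (Fin N → ℂ) ⧸ LinearMap.range A.mulVecLin))) := by
  classical
  set T := A.mulVecLin with hT
  set K := LinearMap.ker T with hK
  set R := LinearMap.range T with hR
  set k := Module.finrank ℂ K with hk
  have hrank : Module.finrank ℂ R + k = N := by
    have h1 := LinearMap.finrank_range_add_finrank_ker T
    rwa [Module.finrank_fin_fun] at h1
  have hkN : k ≤ N := by omega
  obtain ⟨K', hK'⟩ := Submodule.exists_isCompl K
  obtain ⟨R', hR'⟩ := Submodule.exists_isCompl R
  have hK'rank : Module.finrank ℂ K' = N - k := by
    have := Submodule.finrank_add_eq_of_isCompl hK'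
    rw [Module.finrank_fin_fun] at this
    omega
  have hR'rank : Module.finrank ℂ R' = k := by
    have := Submodule.finrank_add_eq_of_isCompl hR'
    rw [Module.finrank_fin_fun] at this
    omega
  let bK : Module.Basis (Fin k) ℂ K := Module.finBasis ℂ K
  let bK' : Module.Basis (Fin (N - k)) ℂ K' := (Module.finBasis ℂ K').reindex (finCongr hK'rank)
  let bR' : Module.Basis (Fin k) ℂ R' := (Module.finBasis ℂ R').reindex (finCongr hR'rank)
  -- the equivalence K' ≃ R via T
  let f : K' →ₗ[ℂ] R := LinearMap.codRestrict R (T.comp K'.subtype)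
    (fun x => LinearMap.mem_range_self T x.1)
  have hfapp : ∀ x : K', (f x : Fin N → ℂ) = T x.1 := fun x => rfl
  have hfinj : Function.Injective f := by
    intro x y hxy
    have h1 : T ((x : Fin N → ℂ) - y) = 0 := by
      have := congrArg (fun z : R => (z : Fin N → ℂ)) hxy
      simp only [hfapp] at this
      rw [map_sub, this, sub_self]
    have h2 : ((x : Fin N → ℂ) - y) ∈ K := h1
    have h3 : ((x : Fin N → ℂ) - y) ∈ K' := K'.sub_mem x.2 y.2
    have h4 : ((x : Fin N → ℂ) - y) = 0 :=
      Submodule.disjoint_def.1 hK'.symm.disjoint _ h3 h2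
    exact Subtype.ext (by rwa [sub_eq_zero] at h4)
  have hfsurj : Function.Surjective f := by
    rintro ⟨y, hy⟩
    obtain ⟨x, rfl⟩ := hy
    have hx : x ∈ K ⊔ K' := by rw [hK'.sup_eq_top]; exact Submodule.mem_top
    obtain ⟨u, hu, v, hv, rfl⟩ := Submodule.mem_sup.1 hx
    refine ⟨⟨v, hv⟩, Subtype.ext ?_⟩
    rw [hfapp]
    have hu0 : T u = 0 := hu
    simp [map_add, hu0]
  let eTK' : K' ≃ₗ[ℂ] R := LinearEquiv.ofBijective f ⟨hfinj, hfsurj⟩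
  let bR : Module.Basis (Fin (N - k)) ℂ R := bK'.map eTK'
  let bV : Module.Basis (Fin (N - k) ⊕ Fin k) ℂ (Fin N → ℂ) :=
    (bK'.prod bK).map (Submodule.prodEquivOfIsCompl K' K hK'.symm)
  let bU : Module.Basis (Fin (N - k) ⊕ Fin k) ℂ (Fin N → ℂ) :=
    (bR.prod bR').map (Submodule.prodEquivOfIsCompl R R' hR')
  have hbVinl : ∀ i, bV (Sum.inl i) = (bK' i : Fin N → ℂ) := by
    intro i
    show (Submodule.prodEquivOfIsCompl K' K hK'.symm) ((bK'.prod bK) (Sum.inl i)) = _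
    rw [Submodule.coe_prodEquivOfIsCompl']
    rw [Module.Basis.prod_apply_inl_fst, Module.Basis.prod_apply_inl_snd]
    simp
  have hbVinr : ∀ j, bV (Sum.inr j) = (bK j : Fin N → ℂ) := by
    intro j
    show (Submodule.prodEquivOfIsCompl K' K hK'.symm) ((bK'.prod bK) (Sum.inr j)) = _
    rw [Submodule.coe_prodEquivOfIsCompl']
    rw [Module.Basis.prod_apply_inr_fst, Module.Basis.prod_apply_inr_snd]
    simp
  have hbUinl : ∀ i, bU (Sum.inl i) = (bR i : Fin N → ℂ) := by
    intro i
    show (Submodule.prodEquivOfIsCompl R R' hR') ((bR.prod bR') (Sum.inl i)) = _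
    rw [Submodule.coe_prodEquivOfIsCompl']
    rw [Module.Basis.prod_apply_inl_fst, Module.Basis.prod_apply_inl_snd]
    simp
  have hbUinr : ∀ i, bU (Sum.inr i) = (bR' i : Fin N → ℂ) := by
    intro i
    show (Submodule.prodEquivOfIsCompl R R' hR') ((bR.prod bR') (Sum.inr i)) = _
    rw [Submodule.coe_prodEquivOfIsCompl']
    rw [Module.Basis.prod_apply_inr_fst, Module.Basis.prod_apply_inr_snd]
    simp
  have hTbVinl : ∀ i, T (bV (Sum.inl i)) = bU (Sum.inl i) := by
    intro i
    rw [hbVinl, hbUinl]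
    show T (bK' i : Fin N → ℂ) = _
    have : bR i = eTK' (bK' i) := Module.Basis.map_apply _ _ _
    rw [this]
    rfl
  have hTbVinr : ∀ j, T (bV (Sum.inr j)) = 0 := by
    intro j
    rw [hbVinr]
    exact (bK j).2
  -- matrix of a matrix X in the bases bV, bU
  set Φ : Matrix (Fin N) (Fin N) ℂ → Matrix (Fin (N - k) ⊕ Fin k) (Fin (N - k) ⊕ Fin k) ℂ :=
    fun X => LinearMap.toMatrix bV bU X.mulVecLin with hΦ
  have hE : Φ A = Matrix.fromBlocks 1 0 0 0 := by
    ext p q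
    show (LinearMap.toMatrix bV bU) A.mulVecLin p q = _
    rw [LinearMap.toMatrix_apply]
    cases q with
    | inl j =>
      rw [hTbVinl j, Module.Basis.repr_self]
      cases p with
      | inl i => simp [Matrix.one_apply, Finsupp.single_apply, eq_comm]
      | inr i => simp [Finsupp.single_apply]
    | inr j =>
      rw [hTbVinr j]
      cases p <;> simp
  set C : Matrix (Fin (N - k) ⊕ Fin k) (Fin (N - k) ⊕ Fin k) ℂ :=
    LinearMap.toMatrix bV bU LinearMap.id with hC
  set C' : Matrix (Fin (N - k) ⊕ Fin k) (Fin (N - k) ⊕ Fin k) ℂ :=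
    LinearMap.toMatrix bU bV LinearMap.id with hC'
  have hCC' : C' * C = 1 := by
    rw [hC, hC', ← LinearMap.toMatrix_comp bV bU bV LinearMap.id LinearMap.id]
    simp [LinearMap.toMatrix_id]
  have hdetC : C.det ≠ 0 := by
    intro h
    have := congrArg Matrix.det hCC'
    rw [Matrix.det_mul, h, mul_zero] at this
    simp at this
  have hΦdet : ∀ X : Matrix (Fin N) (Fin N) ℂ, (Φ X).det = X.det * C.det := by
    intro X
    have h1 : Φ X = LinearMap.toMatrix bU bU X.mulVecLin * C := by
      rw [hΦ, hC, ← LinearMap.toMatrix_comp bV bU bU X.mulVecLin LinearMap.id]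
      simp
    rw [h1, Matrix.det_mul]
    congr 1
    rw [LinearMap.det_toMatrix]
    rw [← Matrix.toLin'_apply' X]
    exact LinearMap.det_toLin' X
  have hΦlin : ∀ p q, HasDerivAt (fun s => Φ (M s) p q) (Φ B p q) 0 := by
    intro p q
    let ℓ : Matrix (Fin N) (Fin N) ℂ →ₗ[ℂ] ℂ :=
      { toFun := fun X => Φ X p q
        map_add' := by
          intro X Y
          show (LinearMap.toMatrix bV bU) (X + Y).mulVecLin p q = _
          rw [Matrix.mulVecLin_add, map_add]
          rfl
        map_smul' := by
          intro c X
          show (LinearMap.toMatrix bV bU) (c • X).mulVecLin p q = _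
          have : (c • X).mulVecLin = c • X.mulVecLin := by
            ext v
            simp [Matrix.mulVecLin_apply, Matrix.smul_mulVec]
          rw [this, _root_.map_smul]
          rfl }
    exact hasDerivAt_linear_matrix ℓ hM
  set Ns : ℝ → Matrix (Fin (N - k) ⊕ Fin k) (Fin (N - k) ⊕ Fin k) ℂ :=
    fun s => Φ (M s) with hNs
  have hNs0 : Ns 0 = Matrix.fromBlocks 1 0 0 0 := by
    rw [hNs]
    simp only [hM0]
    exact hE
  have hcont : ∀ p q, Tendsto (fun s => Ns s p q) (𝓝[≠] (0:ℝ)) (𝓝 (Ns 0 p q)) :=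
    fun p q => ((hΦlin p q).continuousAt.tendsto).mono_left nhdsWithin_le_nhds
  have hslope : ∀ p q, Ns 0 p q = 0 →
      Tendsto (fun s : ℝ => (s : ℂ)⁻¹ * Ns s p q) (𝓝[≠] (0:ℝ)) (𝓝 (Φ B p q)) := by
    intro p q h0
    exact tendsto_div_of_hasDerivAt h0 (hΦlin p q)
  have t11 : Tendsto (fun s => (Ns s).toBlocks₁₁) (𝓝[≠] (0:ℝ)) (𝓝 1) := by
    apply tendsto_matrix_of_entries
    intro i j
    have h := hcont (Sum.inl i) (Sum.inl j)
    rw [hNs0, Matrix.fromBlocks_apply₁₁] at h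
    exact h
  have t12 : Tendsto (fun s => (Ns s).toBlocks₁₂) (𝓝[≠] (0:ℝ)) (𝓝 0) := by
    apply tendsto_matrix_of_entries
    intro i j
    have h := hcont (Sum.inl i) (Sum.inr j)
    rw [hNs0, Matrix.fromBlocks_apply₁₂] at h
    exact h
  have t21 : Tendsto (fun s : ℝ => ((s:ℂ))⁻¹ • (Ns s).toBlocks₂₁) (𝓝[≠] (0:ℝ))
      (𝓝 ((Φ B).toBlocks₂₁)) := by
    apply tendsto_matrix_of_entries
    intro i j
    have h := hslope (Sum.inr i) (Sum.inl j) (by rw [hNs0, Matrix.fromBlocks_apply₂₁]; rfl)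
    exact h
  have t22 : Tendsto (fun s : ℝ => ((s:ℂ))⁻¹ • (Ns s).toBlocks₂₂) (𝓝[≠] (0:ℝ))
      (𝓝 ((Φ B).toBlocks₂₂)) := by
    apply tendsto_matrix_of_entries
    intro i j
    have h := hslope (Sum.inr i) (Sum.inr j) (by rw [hNs0, Matrix.fromBlocks_apply₂₂]; rfl)
    exact h
  have tinv : Tendsto (fun s => ((Ns s).toBlocks₁₁)⁻¹) (𝓝[≠] (0:ℝ)) (𝓝 1) := by
    have h1 : ContinuousAt Ring.inverse (Matrix.det (1 : Matrix (Fin (N - k)) (Fin (N - k)) ℂ)) := by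
      rw [Matrix.det_one]
      have : (Ring.inverse : ℂ → ℂ) = Inv.inv := by
        funext z
        exact Ring.inverse_eq_inv z
      rw [this]
      exact continuousAt_inv₀ one_ne_zero
    have h2 := (continuousAt_matrix_inv (1 : Matrix (Fin (N - k)) (Fin (N - k)) ℂ) h1).tendsto.comp t11
    rwa [inv_one] at h2
  set St : ℝ → Matrix (Fin k) (Fin k) ℂ := fun s =>
    ((s:ℂ))⁻¹ • (Ns s).toBlocks₂₂ -
      (((s:ℂ))⁻¹ • (Ns s).toBlocks₂₁) * ((Ns s).toBlocks₁₁)⁻¹ * (Ns s).toBlocks₁₂ with hSt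
  have tS : Tendsto St (𝓝[≠] (0:ℝ)) (𝓝 ((Φ B).toBlocks₂₂)) := by
    have h2 : Tendsto (fun x : ℝ => ((x:ℂ))⁻¹ • (Ns x).toBlocks₂₂ -
        (((x:ℂ))⁻¹ • (Ns x).toBlocks₂₁) * ((Ns x).toBlocks₁₁)⁻¹ * (Ns x).toBlocks₁₂)
        (𝓝[≠] (0:ℝ)) (𝓝 ((Φ B).toBlocks₂₂ - (Φ B).toBlocks₂₁ * (1 : Matrix (Fin (N - k)) (Fin (N - k)) ℂ) *
          (0 : Matrix (Fin (N - k)) (Fin k) ℂ))) :=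
      t22.sub (tendsto_matmul (tendsto_matmul t21 tinv) t12)
    rw [show (Φ B).toBlocks₂₂ - (Φ B).toBlocks₂₁ * (1 : Matrix (Fin (N - k)) (Fin (N - k)) ℂ) *
        (0 : Matrix (Fin (N - k)) (Fin k) ℂ) = (Φ B).toBlocks₂₂ by simp] at h2
    exact h2
  have tprod : Tendsto (fun s => ((Ns s).toBlocks₁₁).det * (St s).det) (𝓝[≠] (0:ℝ))
      (𝓝 (((Φ B).toBlocks₂₂).det)) := by
    have := (tendsto_det t11).mul (tendsto_det tS)
    simpa using this
  have hdet11ne : ∀ᶠ s in 𝓝[≠] (0:ℝ), ((Ns s).toBlocks₁₁).det ≠ 0 := by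
    have h := tendsto_det t11
    rw [Matrix.det_one] at h
    exact h.eventually_ne one_ne_zero
  have hevent : ∀ᶠ s in 𝓝[≠] (0:ℝ),
      (M s).det / (s:ℂ) ^ k = (C.det)⁻¹ * (((Ns s).toBlocks₁₁).det * (St s).det) := by
    filter_upwards [hdet11ne, self_mem_nhdsWithin] with s hs hs0
    replace hs0 : s ≠ 0 := hs0
    have hsC : (s:ℂ) ≠ 0 := by exact_mod_cast hs0
    haveI := (Ns s).toBlocks₁₁.invertibleOfIsUnitDet (isUnit_iff_ne_zero.2 hs)
    have hblocks : Ns s = Matrix.fromBlocks ((Ns s).toBlocks₁₁) ((Ns s).toBlocks₁₂)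
        ((Ns s).toBlocks₂₁) ((Ns s).toBlocks₂₂) := (Matrix.fromBlocks_toBlocks (Ns s)).symm
    have hdetNs : (Ns s).det = ((Ns s).toBlocks₁₁).det *
        ((Ns s).toBlocks₂₂ - (Ns s).toBlocks₂₁ * ((Ns s).toBlocks₁₁)⁻¹ * (Ns s).toBlocks₁₂).det := by
      conv_lhs => rw [hblocks]
      rw [← Matrix.invOf_eq_nonsing_inv]
      exact Matrix.det_fromBlocks₁₁ _ _ _ _
    have hSchur : (s:ℂ) • St s = (Ns s).toBlocks₂₂ -
        (Ns s).toBlocks₂₁ * ((Ns s).toBlocks₁₁)⁻¹ * (Ns s).toBlocks₁₂ := by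
      rw [hSt]
      rw [smul_sub, smul_smul, mul_inv_cancel₀ hsC, one_smul]
      congr 1
      rw [← Matrix.smul_mul, ← Matrix.smul_mul, smul_smul, mul_inv_cancel₀ hsC, one_smul]
    have hdetSchur : ((Ns s).toBlocks₂₂ -
        (Ns s).toBlocks₂₁ * ((Ns s).toBlocks₁₁)⁻¹ * (Ns s).toBlocks₁₂).det
        = (s:ℂ)^k * (St s).det := by
      rw [← hSchur, Matrix.det_smul, Fintype.card_fin]
    have h3 : (M s).det * C.det = ((Ns s).toBlocks₁₁).det * ((s:ℂ)^k * (St s).det) := by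
      rw [← hΦdet (M s)]
      rw [show Φ (M s) = Ns s from rfl, hdetNs, hdetSchur]
    rw [div_eq_iff (pow_ne_zero k hsC)]
    have h4 : (M s).det = C.det⁻¹ * (((Ns s).toBlocks₁₁).det * ((s:ℂ)^k * (St s).det)) := by
      rw [← h3, mul_comm ((M s).det) C.det, ← mul_assoc, inv_mul_cancel₀ hdetC, one_mul]
    rw [h4]
    ring
  have tfinal : Tendsto (fun s : ℝ => (M s).det / (s:ℂ)^k) (𝓝[≠] (0:ℝ))
      (𝓝 ((C.det)⁻¹ * ((Φ B).toBlocks₂₂).det)) := by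
    have h := (tendsto_const_nhds (x := (C.det)⁻¹) (f := 𝓝[≠] (0:ℝ))).mul tprod
    exact Tendsto.congr' (EventuallyEq.symm hevent) h
  -- bijectivity characterization
  let eQ : ((Fin N → ℂ) ⧸ R) ≃ₗ[ℂ] R' := Submodule.quotientEquivOfIsCompl R R' hR'
  let bQ : Module.Basis (Fin k) ℂ ((Fin N → ℂ) ⧸ R) := bR'.map eQ.symm
  have hbQ : ∀ i, bQ i = Submodule.Quotient.mk (bR' i : Fin N → ℂ) := by
    intro i
    show eQ.symm (bR' i) = _
    exact Submodule.quotientEquivOfIsCompl_symm_apply R R' hR' (bR' i)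
  let φL : K →ₗ[ℂ] ((Fin N → ℂ) ⧸ R) := R.mkQ ∘ₗ (B.mulVecLin ∘ₗ K.subtype)
  have hmkinl : ∀ i, R.mkQ (bU (Sum.inl i)) = 0 := by
    intro i
    rw [hbUinl]
    exact (Submodule.Quotient.mk_eq_zero R).2 (bR i).2
  have hmkinr : ∀ i, R.mkQ (bU (Sum.inr i)) = bQ i := by
    intro i
    rw [hbUinr, hbQ]
    rfl
  have hφmat : LinearMap.toMatrix bK bQ φL = (Φ B).toBlocks₂₂ := by
    ext i j
    rw [LinearMap.toMatrix_apply]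
    have h1 : φL (bK j) = R.mkQ (B.mulVecLin (bV (Sum.inr j))) := by
      rw [hbVinr]
      rfl
    have h2 : B.mulVecLin (bV (Sum.inr j)) = ∑ p, Φ B p (Sum.inr j) • bU p := by
      conv_lhs => rw [← Matrix.toLin_toMatrix bV bU B.mulVecLin]
      exact Matrix.toLin_self bV bU (LinearMap.toMatrix bV bU B.mulVecLin) (Sum.inr j)
    rw [h1, h2, map_sum, Fintype.sum_sum_type]
    simp only [_root_.map_smul, hmkinl, hmkinr, smul_zero, Finset.sum_const_zero, zero_add]
    rw [map_sum]
    simp only [_root_.map_smul, Module.Basis.repr_self]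
    show (∑ i', Φ B (Sum.inr i') (Sum.inr j) • Finsupp.single i' (1:ℂ)) i = _
    rw [Finsupp.finset_sum_apply]
    simp [Finsupp.single_apply, Matrix.toBlocks₂₂]
  have hbijiff : Function.Bijective φL ↔ ((Φ B).toBlocks₂₂).det ≠ 0 := by
    have h := bijective_toLin_iff bK bQ (LinearMap.toMatrix bK bQ φL)
    rw [Matrix.toLin_toMatrix] at h
    rw [hφmat] at h
    exact h
  refine ⟨(C.det)⁻¹ * ((Φ B).toBlocks₂₂).det, tfinal, ?_⟩
  rw [mul_ne_zero_iff]
  constructor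
  · rintro ⟨-, h2⟩
    exact hbijiff.2 h2
  · intro h
    exact ⟨inv_ne_zero hdetC, hbijiff.1 h⟩


lemma tendsto_div_pow_lt {F : ℝ → ℂ} {b : ℕ} {c : ℂ}
    (h : Tendsto (fun s : ℝ => F s / (s:ℂ)^b) (𝓝[≠] (0:ℝ)) (𝓝 c)) {a : ℕ} (hab : a < b) :
    Tendsto (fun s : ℝ => F s / (s:ℂ)^a) (𝓝[≠] (0:ℝ)) (𝓝 0) := by
  have hpow : Tendsto (fun s : ℝ => ((s:ℂ))^(b - a)) (𝓝[≠] (0:ℝ)) (𝓝 0) := by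
    have hc : Continuous (fun s : ℝ => ((s:ℂ))^(b - a)) := by continuity
    have := (hc.tendsto 0).mono_left (nhdsWithin_le_nhds (s := {(0:ℝ)}ᶜ))
    simpa [zero_pow (by omega : b - a ≠ 0)] using this
  have hmul := h.mul hpow
  rw [mul_zero] at hmul
  refine hmul.congr' ?_
  filter_upwards [self_mem_nhdsWithin] with s hs
  have hsC : (s:ℂ) ≠ 0 := by exact_mod_cast hs
  have hsplit : (s:ℂ)^b = (s:ℂ)^a * (s:ℂ)^(b - a) := by
    rw [← pow_add]
    congr 1
    omega
  rw [hsplit]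
  field_simp


end PrincipalTypeAux


/-- The directional derivative `∂_ν P(w₀)` of a matrix family, taken entrywise. -/
noncomputable def dirDeriv {d N : ℕ}
    (P : (Fin d → ℝ) → Matrix (Fin N) (Fin N) ℂ) (w₀ ν : Fin d → ℝ) :
    Matrix (Fin N) (Fin N) ℂ :=
  Matrix.of fun i j => deriv (fun s : ℝ => P (w₀ + s • ν) i j) 0

/-- `P` is of principal type at `w₀`: for some direction `ν`, the map
`u ↦ ∂_ν P(w₀) u` from `ker P(w₀)` to `ℂ^N / Ran P(w₀)` is bijective. -/
def IsPrincipalTypeAt {d N : ℕ}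
    (P : (Fin d → ℝ) → Matrix (Fin N) (Fin N) ℂ) (w₀ : Fin d → ℝ) : Prop :=
  ∃ ν : Fin d → ℝ, Function.Bijective
    (fun u : LinearMap.ker (P w₀).mulVecLin =>
      (Submodule.Quotient.mk ((dirDeriv P w₀ ν).mulVec u.1) :
        (Fin N → ℂ) ⧸ LinearMap.range (P w₀).mulVecLin))

theorem principal_type_iff_dlam_ne_zero_and_geom_eq_alg
    {d N : ℕ} (P : (Fin d → ℝ) → Matrix (Fin N) (Fin N) ℂ) (w₀ : Fin d → ℝ)
    (lam : (Fin d → ℝ) → ℂ) (e : (Fin d → ℝ) → ℂ → ℂ) (m : ℕ)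
    (hP : ∀ i j, ContDiff ℝ (⊤ : ℕ∞) fun w => P w i j)
    (hdet : (P w₀).det = 0)
    (hlam : ContDiff ℝ (⊤ : ℕ∞) lam) (hlam0 : lam w₀ = 0)
    (he : ContDiff ℝ (⊤ : ℕ∞) fun p : (Fin d → ℝ) × ℂ => e p.1 p.2)
    (hene : ∀ w z, e w z ≠ 0)
    (hm : 0 < m)
    (hfact : ∀ w z,
      (P w - z • (1 : Matrix (Fin N) (Fin N) ℂ)).det = (lam w - z) ^ m * e w z) :
    IsPrincipalTypeAt P w₀ ↔
      (fderiv ℝ lam w₀ ≠ 0 ∧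
        Module.finrank ℂ (LinearMap.ker (P w₀).mulVecLin) = m) := by
  classical
  open PrincipalTypeAux in
  set k := Module.finrank ℂ (LinearMap.ker (P w₀).mulVecLin) with hk
  -- ### step 1 : k ≤ m, via the family s ↦ P w₀ - s • 1
  have hklem : k ≤ m := by
    set M2 : ℝ → Matrix (Fin N) (Fin N) ℂ := fun s => P w₀ - (s:ℂ) • 1 with hM2
    have hM2der : ∀ i j, HasDerivAt (fun s => M2 s i j)
        ((-1 : Matrix (Fin N) (Fin N) ℂ) i j) 0 := by
      intro i j
      have h1 : HasDerivAt (fun s : ℝ => (s:ℂ)) 1 0 := by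
        simpa using (hasDerivAt_id (0:ℝ)).ofReal_comp
      have h2 : HasDerivAt (fun s : ℝ => (s:ℂ) * (1 : Matrix (Fin N) (Fin N) ℂ) i j)
          ((1 : Matrix (Fin N) (Fin N) ℂ) i j) 0 := by
        simpa using h1.mul_const ((1 : Matrix (Fin N) (Fin N) ℂ) i j)
      have h3 := h2.const_sub (P w₀ i j)
      have hfun : (fun s : ℝ => P w₀ i j - (s:ℂ) * (1 : Matrix (Fin N) (Fin N) ℂ) i j)
          = fun s => M2 s i j := by
        funext s
        rw [hM2]
        simp [Matrix.sub_apply, Matrix.smul_apply, smul_eq_mul]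
      rw [hfun] at h3
      simpa [Matrix.neg_apply] using h3
    obtain ⟨c2, hc2t, -⟩ := PrincipalTypeAux.core (P w₀) (-1) M2 (by simp [hM2]) hM2der
    -- the factorization limit at exponent m
    have hdetM2 : ∀ s : ℝ, (M2 s).det = ((0:ℂ) - (s:ℂ))^m * e w₀ (s:ℂ) := by
      intro s
      rw [hM2]
      have := hfact w₀ (s:ℂ)
      rwa [hlam0] at this
    have hecont : Tendsto (fun s : ℝ => e w₀ (s:ℂ)) (𝓝[≠] (0:ℝ)) (𝓝 (e w₀ 0)) := by
      have hc : Continuous (fun s : ℝ => e w₀ (s:ℂ)) := by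
        have hcurve : Continuous (fun s : ℝ => ((w₀, (s:ℂ)) : (Fin d → ℝ) × ℂ)) :=
          continuous_const.prodMk Complex.continuous_ofReal
        exact he.continuous.comp hcurve
      have := hc.tendsto 0
      simpa using this.mono_left (nhdsWithin_le_nhds (s := {(0:ℝ)}ᶜ))
    have t2m : Tendsto (fun s : ℝ => (M2 s).det / (s:ℂ)^m) (𝓝[≠] (0:ℝ))
        (𝓝 ((-1:ℂ)^m * e w₀ 0)) := by
      have h := hecont.const_mul ((-1:ℂ)^m)
      refine h.congr' ?_
      filter_upwards [self_mem_nhdsWithin] with s hs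
      have hsC : (s:ℂ) ≠ 0 := by exact_mod_cast hs
      rw [hdetM2 s]
      rw [zero_sub, neg_pow]
      field_simp
      ring
    by_contra hkm
    push_neg at hkm
    have h0 := PrincipalTypeAux.tendsto_div_pow_lt hc2t (a := m) hkm
    have := tendsto_nhds_unique t2m h0
    exact (mul_ne_zero (pow_ne_zero _ (by norm_num)) (hene w₀ 0)) this
  -- ### curve family for a direction ν
  have hM1der : ∀ ν : Fin d → ℝ, ∀ i j,
      HasDerivAt (fun s : ℝ => P (w₀ + s • ν) i j) ((dirDeriv P w₀ ν) i j) 0 := by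
    intro ν i j
    have hγ : HasDerivAt (fun t : ℝ => w₀ + t • ν) ν 0 := by
      simpa using ((hasDerivAt_id (0:ℝ)).smul_const ν).const_add w₀
    have hdiff : DifferentiableAt ℝ (fun s : ℝ => P (w₀ + s • ν) i j) 0 := by
      have h1 : DifferentiableAt ℝ (fun w => P w i j) (w₀ + (0:ℝ) • ν) :=
        ((hP i j).differentiable (by simp)).differentiableAt
      exact h1.comp 0 hγ.differentiableAt
    have := hdiff.hasDerivAt
    simpa [dirDeriv] using this
  have hM10 : ∀ ν : Fin d → ℝ, (fun s : ℝ => P (w₀ + s • ν)) 0 = P w₀ := by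
    intro ν
    simp
  have t1m : ∀ ν : Fin d → ℝ,
      Tendsto (fun s : ℝ => (P (w₀ + s • ν)).det / (s:ℂ)^m) (𝓝[≠] (0:ℝ))
        (𝓝 ((fderiv ℝ lam w₀ ν)^m * e w₀ 0)) := by
    intro ν
    have hγ : HasDerivAt (fun t : ℝ => w₀ + t • ν) ν 0 := by
      simpa using ((hasDerivAt_id (0:ℝ)).smul_const ν).const_add w₀
    have hflam : HasDerivAt (fun s : ℝ => lam (w₀ + s • ν)) (fderiv ℝ lam w₀ ν) 0 := by
      have h1 : HasFDerivAt lam (fderiv ℝ lam w₀) ((fun t : ℝ => w₀ + t • ν) 0) := by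
        simpa using ((hlam.differentiable (by simp)) w₀).hasFDerivAt
      exact h1.comp_hasDerivAt 0 hγ
    have hlamdiv : Tendsto (fun s : ℝ => (s:ℂ)⁻¹ * lam (w₀ + s • ν)) (𝓝[≠] (0:ℝ))
        (𝓝 (fderiv ℝ lam w₀ ν)) :=
      PrincipalTypeAux.tendsto_div_of_hasDerivAt (by simpa using hlam0) hflam
    have hecont : Tendsto (fun s : ℝ => e (w₀ + s • ν) 0) (𝓝[≠] (0:ℝ)) (𝓝 (e w₀ 0)) := by
      have hc : Continuous (fun s : ℝ => e (w₀ + s • ν) 0) := by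
        have hcurve : Continuous (fun s : ℝ => ((w₀ + s • ν, (0:ℂ)) : (Fin d → ℝ) × ℂ)) :=
          (continuous_const.add (continuous_id.smul continuous_const)).prodMk continuous_const
        exact he.continuous.comp hcurve
      have := hc.tendsto 0
      simpa using this.mono_left (nhdsWithin_le_nhds (s := {(0:ℝ)}ᶜ))
    have h := (hlamdiv.pow m).mul hecont
    refine h.congr' ?_
    filter_upwards [self_mem_nhdsWithin] with s hs
    have hsC : (s:ℂ) ≠ 0 := by exact_mod_cast hs
    have hfac : (P (w₀ + s • ν)).det = (lam (w₀ + s • ν))^m * e (w₀ + s • ν) 0 := by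
      have := hfact (w₀ + s • ν) 0
      simpa using this
    rw [hfac]
    rw [mul_pow]
    field_simp
    rw [one_div, inv_pow]
    field_simp
  constructor
  · rintro ⟨ν, hbij⟩
    obtain ⟨c, hct, hciff⟩ := PrincipalTypeAux.core (P w₀) (dirDeriv P w₀ ν)
      (fun s : ℝ => P (w₀ + s • ν)) (hM10 ν) (hM1der ν)
    have hcne : c ≠ 0 := hciff.2 hbij
    rw [← hk] at hct
    have hkm : k = m := by
      rcases lt_or_eq_of_le hklem with hlt | heq
      · exact absurd (tendsto_nhds_unique hct
          (PrincipalTypeAux.tendsto_div_pow_lt (t1m ν) hlt)) hcne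
      · exact heq
    rw [hkm] at hct
    have hc : c = (fderiv ℝ lam w₀ ν)^m * e w₀ 0 := tendsto_nhds_unique hct (t1m ν)
    refine ⟨?_, hkm⟩
    intro hzero
    apply hcne
    rw [hc, hzero]
    simp [zero_pow hm.ne']
  · rintro ⟨hd, hgeom⟩
    obtain ⟨ν, hν⟩ : ∃ ν, fderiv ℝ lam w₀ ν ≠ 0 := by
      by_contra h
      push_neg at h
      exact hd (ContinuousLinearMap.ext fun x => by simp [h x])
    obtain ⟨c, hct, hciff⟩ := PrincipalTypeAux.core (P w₀) (dirDeriv P w₀ ν)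
      (fun s : ℝ => P (w₀ + s • ν)) (hM10 ν) (hM1der ν)
    rw [← hk, hgeom] at hct
    have hc : c = (fderiv ℝ lam w₀ ν)^m * e w₀ 0 := tendsto_nhds_unique hct (t1m ν)
    have hcne : c ≠ 0 := by
      rw [hc]
      exact mul_ne_zero (pow_ne_zero _ hν) (hene w₀ 0)
    exact ⟨ν, hciff.1 hcne⟩
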